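/- arXiv:2207.05439 — 4 statements merged into one kernel-verified Lean document; each statement's English description precedes it below -/
import Mathlib

section
/- Let I ⊆ ℝ be an interval, p ∈ ℕ, and M : I^p → I^p a mean-type mapping with all coordinate means strict. Suppose K : I^p → I is an M-invariant mean (K ∘ M = K and K is a p-variable mean). Then K is a strict mean: for every nonconstant x ∈ I^p, min(x) < K(x) < max(x). -/
theorem invariant_mean_is_strict
    (I : Set ℝ) (hI : I.OrdConnected) (p : ℕ) (hp : 0 < p)
    (M : (Fin p → ℝ) → (Fin p → ℝ))
    (hMI : ∀ x : Fin p → ℝ, (∀ i, x i ∈ I) → ∀ i, M x i ∈ I)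
    (hstrict : ∀ x : Fin p → ℝ, (∀ i, x i ∈ I) → (∃ i j, x i ≠ x j) →
      ∀ i, (⨅ j, x j) < M x i ∧ M x i < ⨆ j, x j)
    (hmean : ∀ x : Fin p → ℝ, (∀ i, x i ∈ I) →
      ∀ i, (⨅ j, x j) ≤ M x i ∧ M x i ≤ ⨆ j, x j)
    (K : (Fin p → ℝ) → ℝ)
    (hKmean : ∀ x : Fin p → ℝ, (∀ i, x i ∈ I) →
      (⨅ j, x j) ≤ K x ∧ K x ≤ ⨆ j, x j)
    (hKinv : ∀ x : Fin p → ℝ, (∀ i, x i ∈ I) → K (M x) = K x) :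
    ∀ x : Fin p → ℝ, (∀ i, x i ∈ I) → (∃ i j, x i ≠ x j) →
      (⨅ j, x j) < K x ∧ K x < ⨆ j, x j := by
  intro x hxI hxnc
  haveI : Nonempty (Fin p) := ⟨⟨0, hp⟩⟩
  have hMxI : ∀ i, M x i ∈ I := hMI x hxI
  have hKMx := hKmean (M x) hMxI
  have hKeq := hKinv x hxI
  have hs := hstrict x hxI hxnc
  obtain ⟨j0, hj0⟩ := Finite.exists_min (M x)
  obtain ⟨j1, hj1⟩ := Finite.exists_max (M x)
  constructor
  · calc (⨅ j, x j) < M x j0 := (hs j0).1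
      _ = ⨅ j, M x j := le_antisymm (le_ciInf hj0) (ciInf_le (Set.Finite.bddBelow (Set.finite_range _)) j0)
      _ ≤ K (M x) := hKMx.1
      _ = K x := hKeq
  · calc K x = K (M x) := hKeq.symm
      _ ≤ ⨆ j, M x j := hKMx.2
      _ = M x j1 := le_antisymm (ciSup_le hj1) (le_ciSup (Set.Finite.bddAbove (Set.finite_range _)) j1)
      _ < ⨆ j, x j := (hs j1).2
end

section
/- In the setting of an ergodic α-incidence graph and strict coordinate means M_i, for every x ∈ I^p either M_α^{3^p}(x) is a constant vector, or min(x) < min(M_α^{3^p}(x)) ≤ max(M_α^{3^p}(x)) < max(x). -/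
def HasWalk {V : Type*} (E : V → V → Prop) (v w : V) (n : ℕ) : Prop :=
  ∃ f : Fin (n + 1) → V, f 0 = v ∧ f (Fin.last n) = w ∧
    ∀ i : Fin n, E (f i.castSucc) (f i.succ)

def Irreducible' {V : Type*} (E : V → V → Prop) : Prop :=
  ∀ v w : V, ∃ n : ℕ, HasWalk E v w n

def Aperiodic' {V : Type*} (E : V → V → Prop) : Prop :=
  ¬ ∃ k : ℕ, 1 < k ∧ ∀ (n : ℕ) (v : V), 0 < n → HasWalk E v v n → k ∣ n

/-! Irreducibility makes the gcd of the closed-walk lengths at a vertex divide every cycle length,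
so aperiodicity makes it `1` and, by Schur's theorem (`Nat.exists_mem_closure_of_ge`), every pair
of vertices is joined by walks of all large lengths. The sets of vertices reached from `v` by no
walk of length `n` are the iterates of `S ↦ {w | all in-neighbours of w lie in S}` on `{v}ᶜ`, so
they end at the fixed point `∅`, and hence reach it within `2 ^ p ≤ 3 ^ p` steps.

A strict mean equals a lower bound of its arguments only if they all equal it. So if
`M_α^[n] x` takes the value `min x` at `w`, then `x` takes it at every vertex with a walk of length
`n` to `w`; for `n = 3 ^ p` that is every vertex. The maximum is the same statement in `ℝᵒᵈ`. -/

open Filter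

theorem Function.iterate_eq_of_isFixedPt_of_card_le {β : Type*} [Finite β] {f : β → β} {b x : β}
    (hb : Function.IsFixedPt f b) (hx : ∃ n, f^[n] x = b) {m : ℕ} (hm : Nat.card β ≤ m) :
    f^[m] x = b := by
  classical
  set n₀ := Nat.find hx
  have hinj : Function.Injective fun k : Fin (n₀ + 1) => f^[k] x := by
    intro i j hij
    by_contra hne
    wlog hlt : i < j generalizing i j
    · exact this hij.symm (Ne.symm hne) ((not_lt.mp hlt).lt_of_ne' hne)
    -- the orbit would close up before reaching `b`, so `b` would be hit earlier
    refine Nat.find_min hx (m := n₀ - (j - i)) (by omega) ?_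
    have hj : (j : ℕ) ≤ n₀ := Nat.lt_succ_iff.mp j.isLt
    calc f^[n₀ - (j - i)] x = f^[n₀ - j] (f^[i] x) := by
          rw [← Function.iterate_add_apply]; congr 1; omega
      _ = f^[n₀ - j] (f^[j] x) := congrArg _ hij
      _ = b := by rw [← Function.iterate_add_apply, Nat.sub_add_cancel hj, Nat.find_spec hx]
  have hcard : n₀ + 1 ≤ Nat.card β := by
    simpa using Nat.card_le_card_of_injective _ hinj
  rw [← Nat.sub_add_cancel (show n₀ ≤ m by omega), Function.iterate_add_apply, Nat.find_spec hx,
    Function.iterate_fixed hb]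

namespace HasWalk

variable {V : Type*} {E : V → V → Prop} {u v w : V} {m n : ℕ}

theorem zero_iff : HasWalk E v w 0 ↔ v = w := by
  refine ⟨fun ⟨f, h0, hl, _⟩ => h0.symm.trans hl, fun h => ⟨fun _ => v, rfl, h, Fin.elim0⟩⟩

theorem succ_iff : HasWalk E v w (n + 1) ↔ ∃ u, E v u ∧ HasWalk E u w n := by
  constructor
  · rintro ⟨f, h0, hl, he⟩
    refine ⟨f 1, h0 ▸ he 0, Fin.tail f, rfl, hl, fun i => he i.succ⟩
  · rintro ⟨u, hvu, f, h0, hl, he⟩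
    refine ⟨Fin.cons v f, rfl, hl, Fin.cases (by simpa [h0] using hvu) fun i => he i⟩

theorem one_iff : HasWalk E v w 1 ↔ E v w := by
  simp [succ_iff, zero_iff]

theorem add_iff : HasWalk E v w (m + n) ↔ ∃ u, HasWalk E v u m ∧ HasWalk E u w n := by
  induction m generalizing v with
  | zero => simp [zero_iff]
  | succ m ih =>
    rw [Nat.add_right_comm]
    simp only [succ_iff, ih]
    aesop

theorem trans (h₁ : HasWalk E u v m) (h₂ : HasWalk E v w n) : HasWalk E u w (m + n) :=
  add_iff.mpr ⟨v, h₁, h₂⟩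

end HasWalk

def closedWalkLengths {V : Type*} (E : V → V → Prop) (v : V) : AddSubmonoid ℕ where
  carrier := {n | HasWalk E v v n}
  zero_mem' := HasWalk.zero_iff.mpr rfl
  add_mem' := HasWalk.trans

section Primitive

variable {V : Type*} {E : V → V → Prop}

theorem setGcd_closedWalkLengths_dvd (hirr : Irreducible' E) (v : V) {u : V} {c : ℕ}
    (hc : HasWalk E u u c) : Nat.setGcd (closedWalkLengths E v) ∣ c := by
  obtain ⟨a, ha⟩ := hirr v u
  obtain ⟨b, hb⟩ := hirr u v
  have hab : Nat.setGcd (closedWalkLengths E v) ∣ a + b := Nat.setGcd_dvd_of_mem (ha.trans hb)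
  have habc : Nat.setGcd (closedWalkLengths E v) ∣ a + c + b :=
    Nat.setGcd_dvd_of_mem ((ha.trans hc).trans hb)
  rw [Nat.add_right_comm] at habc
  exact (Nat.dvd_add_right hab).mp habc

theorem setGcd_closedWalkLengths_eq_one (hirr : Irreducible' E) (haper : Aperiodic' E) (v : V) :
    Nat.setGcd (closedWalkLengths E v) = 1 := by
  set g := Nat.setGcd (closedWalkLengths E v)
  have hdvd : ∀ n u, HasWalk E u u n → g ∣ n := fun _ _ => setGcd_closedWalkLengths_dvd hirr v
  obtain hg | hg | hg : g = 0 ∨ g = 1 ∨ 1 < g := by omega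
  · refine absurd ⟨2, one_lt_two, fun n u hn hu => ?_⟩ haper
    exact absurd (zero_dvd_iff.mp (hg ▸ hdvd n u hu)) hn.ne'
  · exact hg
  · exact absurd ⟨g, hg, fun n u _ hu => hdvd n u hu⟩ haper

theorem eventually_hasWalk (hirr : Irreducible' E) (haper : Aperiodic' E) (v w : V) :
    ∀ᶠ n in atTop, HasWalk E v w n := by
  obtain ⟨K, hK⟩ := Nat.exists_mem_closure_of_ge (closedWalkLengths E v : Set ℕ)
  obtain ⟨a, ha⟩ := hirr v w
  filter_upwards [eventually_ge_atTop (K + a)] with n hn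
  have hcycle : HasWalk E v v (n - a) := by
    have := hK (n - a) (by omega)
      (by rw [setGcd_closedWalkLengths_eq_one hirr haper]; exact one_dvd _)
    rwa [AddSubmonoid.closure_eq] at this
  simpa [Nat.sub_add_cancel (show a ≤ n by omega)] using hcycle.trans ha

theorem eventually_forall_hasWalk [Finite V] (hirr : Irreducible' E) (haper : Aperiodic' E) :
    ∀ᶠ n in atTop, ∀ v w, HasWalk E v w n := by
  simp only [eventually_all]
  exact eventually_hasWalk hirr haper

theorem Aperiodic'.nonempty (haper : Aperiodic' E) : Nonempty V := by
  by_contra hV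
  exact haper ⟨2, one_lt_two, fun _ v => (not_nonempty_iff.mp hV).elim v⟩

def predsWithin (E : V → V → Prop) (S : Set V) : Set V := {w | ∀ v, E v w → v ∈ S}

theorem mem_iterate_predsWithin {S : Set V} {w : V} {n : ℕ} :
    w ∈ (predsWithin E)^[n] S ↔ ∀ v, HasWalk E v w n → v ∈ S := by
  induction n generalizing S with
  | zero => simp [HasWalk.zero_iff]
  | succ n ih =>
    simp only [Function.iterate_succ_apply, ih, HasWalk.succ_iff, predsWithin, Set.mem_ofPred_eq]
    aesop

theorem hasWalk_of_two_pow_card_le [Fintype V] (hirr : Irreducible' E) (haper : Aperiodic' E)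
    {n : ℕ} (hn : 2 ^ Fintype.card V ≤ n) (v w : V) : HasWalk E v w n := by
  classical
  obtain ⟨K, hK⟩ := (eventually_forall_hasWalk hirr haper).exists_forall_of_atTop
  have hfix : Function.IsFixedPt (predsWithin E) ∅ := by
    refine Set.eq_empty_of_forall_notMem fun w hw => ?_
    obtain ⟨u, -, hu⟩ := HasWalk.add_iff.mp (hK (K + 1) K.le_succ v w)
    exact hw u (HasWalk.one_iff.mp hu)
  have hreach : ∃ k, (predsWithin E)^[k] {v}ᶜ = ∅ :=
    ⟨K, Set.eq_empty_of_forall_notMem fun w hw =>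
      mem_iterate_predsWithin.mp hw v (hK K le_rfl v w) rfl⟩
  have hcard : Nat.card (Set V) ≤ n := by
    rwa [Nat.card_eq_fintype_card, Fintype.card_set]
  have := Function.iterate_eq_of_isFixedPt_of_card_le hfix hreach hcard
  by_contra hvw
  exact (Set.eq_empty_iff_forall_notMem.mp this) w
    (mem_iterate_predsWithin.mpr fun u hu huv => hvw (huv ▸ hu))

end Primitive

section Means

variable {β : Type*} [ConditionallyCompleteLinearOrder β] {I : Set β}

def IsMeanOn {κ : Type*} (I : Set β) (m : (κ → β) → β) : Prop :=
  ∀ y : κ → β, (∀ j, y j ∈ I) → (⨅ j, y j) ≤ m y ∧ m y ≤ ⨆ j, y j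

def IsStrictMeanOn {κ : Type*} (I : Set β) (m : (κ → β) → β) : Prop :=
  IsMeanOn I m ∧
    ∀ y : κ → β, (∀ j, y j ∈ I) → (∃ j k, y j ≠ y k) → (⨅ j, y j) < m y ∧ m y < ⨆ j, y j

section Single

variable {κ : Type*} [Nonempty κ] {m : (κ → β) → β}

theorem IsMeanOn.apply_const (hm : IsMeanOn I m) {c : β} (hc : c ∈ I) : m (fun _ => c) = c := by
  have := hm _ fun _ => hc
  rw [ciInf_const, ciSup_const] at this
  exact le_antisymm this.2 this.1

theorem IsMeanOn.le_apply (hm : IsMeanOn I m) {y : κ → β} (hy : ∀ j, y j ∈ I) {c : β}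
    (hc : ∀ j, c ≤ y j) : c ≤ m y :=
  (le_ciInf hc).trans (hm y hy).1

theorem IsStrictMeanOn.eq_of_apply_eq (hm : IsStrictMeanOn I m) {y : κ → β} (hy : ∀ j, y j ∈ I)
    {c : β} (hc : ∀ j, c ≤ y j) (hmc : m y = c) (j : κ) : y j = c := by
  by_cases hne : ∃ j k, y j ≠ y k
  · exact absurd (hmc ▸ (le_ciInf hc).trans_lt (hm.2 y hy hne).1) (lt_irrefl c)
  · push Not at hne
    rwa [show y = fun _ => y j from funext fun k => hne k j, hm.1.apply_const (hy j)] at hmc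

end Single

variable {ι : Type*} {κ : ι → Type*} [∀ i, Nonempty (κ i)]

def incidenceRel (α : ∀ i, κ i → ι) (a i : ι) : Prop := ∃ j, α i j = a

def meanMap (α : ∀ i, κ i → ι) (M : ∀ i, (κ i → β) → β) (z : ι → β) : ι → β :=
  fun i => M i fun j => z (α i j)

variable {α : ∀ i, κ i → ι} {M : ∀ i, (κ i → β) → β}

theorem meanMap_const (hM : ∀ i, IsMeanOn I (M i)) {c : β} (hc : c ∈ I) :
    meanMap α M (fun _ => c) = fun _ => c :=
  funext fun i => (hM i).apply_const hc

theorem le_meanMap_iterate (hMI : ∀ i (y : κ i → β), (∀ j, y j ∈ I) → M i y ∈ I)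
    (hM : ∀ i, IsMeanOn I (M i)) {x : ι → β} (hx : ∀ i, x i ∈ I) {c : β} (hc : ∀ i, c ≤ x i)
    (n : ℕ) (i : ι) : c ≤ (meanMap α M)^[n] x i := by
  induction n generalizing x with
  | zero => exact hc i
  | succ n ih =>
    exact ih (fun i => hMI i _ fun _ => hx _) fun i => (hM i).le_apply (fun _ => hx _) fun _ => hc _

theorem eq_of_meanMap_iterate_eq (hMI : ∀ i (y : κ i → β), (∀ j, y j ∈ I) → M i y ∈ I)
    (hM : ∀ i, IsStrictMeanOn I (M i)) {x : ι → β} (hx : ∀ i, x i ∈ I) {c : β}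
    (hc : ∀ i, c ≤ x i) {v w : ι} {n : ℕ} (hvw : HasWalk (incidenceRel α) v w n)
    (hn : (meanMap α M)^[n] x w = c) : x v = c := by
  induction n generalizing x v with
  | zero => rwa [HasWalk.zero_iff.mp hvw]
  | succ n ih =>
    obtain ⟨u, ⟨j, rfl⟩, huw⟩ := HasWalk.succ_iff.mp hvw
    have hxu : meanMap α M x u = c :=
      ih (fun i => hMI i _ fun _ => hx _) (fun i => (hM i).1.le_apply (fun _ => hx _) fun _ => hc _)
        huw hn
    exact (hM u).eq_of_apply_eq (fun _ => hx _) (fun _ => hc _) hxu j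

theorem iInf_lt_iInf_meanMap_iterate [Finite ι] [Nonempty ι]
    (hMI : ∀ i (y : κ i → β), (∀ j, y j ∈ I) → M i y ∈ I) (hM : ∀ i, IsStrictMeanOn I (M i))
    {n : ℕ} (hwalk : ∀ v w, HasWalk (incidenceRel α) v w n)
    {x : ι → β} (hx : ∀ i, x i ∈ I) (hne : ∀ c, x ≠ fun _ => c) :
    ⨅ i, x i < ⨅ i, (meanMap α M)^[n] x i := by
  have hc : ∀ i, ⨅ i, x i ≤ x i := ciInf_le (Finite.bddBelow_range x)
  refine lt_of_le_of_ne (le_ciInf (le_meanMap_iterate hMI (fun i => (hM i).1) hx hc n))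
    fun heq => ?_
  obtain ⟨w, hw⟩ := exists_eq_ciInf_of_finite (f := (meanMap α M)^[n] x)
  exact hne _ (funext fun v => eq_of_meanMap_iterate_eq hMI hM hx hc (hwalk v w) (hw.trans heq.symm))

theorem iSup_meanMap_iterate_lt [Finite ι] [Nonempty ι]
    (hMI : ∀ i (y : κ i → β), (∀ j, y j ∈ I) → M i y ∈ I) (hM : ∀ i, IsStrictMeanOn I (M i))
    {n : ℕ} (hwalk : ∀ v w, HasWalk (incidenceRel α) v w n)
    {x : ι → β} (hx : ∀ i, x i ∈ I) (hne : ∀ c, x ≠ fun _ => c) :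
    ⨆ i, (meanMap α M)^[n] x i < ⨆ i, x i :=
  iInf_lt_iInf_meanMap_iterate (β := βᵒᵈ) (I := I) hMI
    (fun i => ⟨fun y hy => ((hM i).1 y hy).symm, fun y hy hne => ((hM i).2 y hy hne).symm⟩)
    hwalk hx hne

end Means

theorem ergodic_incidence_graph_dichotomy_general
    (I : Set ℝ) (p : ℕ)
    (d : Fin p → ℕ) (hd : ∀ i, 0 < d i)
    (α : ∀ i : Fin p, Fin (d i) → Fin p)
    (hirr : Irreducible' (fun a i : Fin p => ∃ j : Fin (d i), α i j = a))
    (haper : Aperiodic' (fun a i : Fin p => ∃ j : Fin (d i), α i j = a))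
    (M : ∀ i : Fin p, (Fin (d i) → ℝ) → ℝ)
    (hMI : ∀ (i : Fin p) (y : Fin (d i) → ℝ), (∀ j, y j ∈ I) → M i y ∈ I)
    (hmean : ∀ (i : Fin p) (y : Fin (d i) → ℝ), (∀ j, y j ∈ I) →
      (⨅ j, y j) ≤ M i y ∧ M i y ≤ ⨆ j, y j)
    (hstrict : ∀ (i : Fin p) (y : Fin (d i) → ℝ), (∀ j, y j ∈ I) →
      (∃ j k, y j ≠ y k) → (⨅ j, y j) < M i y ∧ M i y < ⨆ j, y j) :
    ∀ x : Fin p → ℝ, (∀ i, x i ∈ I) →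
      (∃ c : ℝ, (fun z : Fin p → ℝ => fun i => M i (fun j => z (α i j)))^[3 ^ p] x
          = fun _ => c) ∨
      ((⨅ i, x i) <
          (⨅ i, (fun z : Fin p → ℝ => fun i => M i (fun j => z (α i j)))^[3 ^ p] x i) ∧
        (⨅ i, (fun z : Fin p → ℝ => fun i => M i (fun j => z (α i j)))^[3 ^ p] x i) ≤
          (⨆ i, (fun z : Fin p → ℝ => fun i => M i (fun j => z (α i j)))^[3 ^ p] x i) ∧
        (⨆ i, (fun z : Fin p → ℝ => fun i => M i (fun j => z (α i j)))^[3 ^ p] x i) <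
          ⨆ i, x i) := by
  intro x hx
  have : ∀ i, Nonempty (Fin (d i)) := fun i => Fin.pos_iff_nonempty.mp (hd i)
  have : Nonempty (Fin p) := haper.nonempty
  change (∃ c, (meanMap α M)^[3 ^ p] x = fun _ => c) ∨ _
  have hwalk : ∀ v w, HasWalk (incidenceRel α) v w (3 ^ p) :=
    hasWalk_of_two_pow_card_le hirr haper (by simpa using Nat.pow_le_pow_left (by norm_num) p)
  have hM : ∀ i, IsStrictMeanOn I (M i) := fun i => ⟨hmean i, hstrict i⟩
  by_cases hx_const : ∃ c, x = fun _ => c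
  · obtain ⟨c, rfl⟩ := hx_const
    exact Or.inl ⟨c, Function.iterate_fixed (meanMap_const hmean (hx (Classical.arbitrary _))) _⟩
  push Not at hx_const
  exact Or.inr ⟨iInf_lt_iInf_meanMap_iterate hMI hM hwalk hx hx_const,
    ciInf_le_ciSup (Finite.bddBelow_range _) (Finite.bddAbove_range _),
    iSup_meanMap_iterate_lt hMI hM hwalk hx hx_const⟩

theorem ergodic_incidence_graph_dichotomy
    (I : Set ℝ) (hI : I.OrdConnected) (p : ℕ) (hp : 0 < p)
    (d : Fin p → ℕ) (hd : ∀ i, 0 < d i)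
    (α : ∀ i : Fin p, Fin (d i) → Fin p)
    (hirr : Irreducible' (fun a i : Fin p => ∃ j : Fin (d i), α i j = a))
    (haper : Aperiodic' (fun a i : Fin p => ∃ j : Fin (d i), α i j = a))
    (M : ∀ i : Fin p, (Fin (d i) → ℝ) → ℝ)
    (hMI : ∀ (i : Fin p) (y : Fin (d i) → ℝ), (∀ j, y j ∈ I) → M i y ∈ I)
    (hmean : ∀ (i : Fin p) (y : Fin (d i) → ℝ), (∀ j, y j ∈ I) →
      (⨅ j, y j) ≤ M i y ∧ M i y ≤ ⨆ j, y j)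
    (hstrict : ∀ (i : Fin p) (y : Fin (d i) → ℝ), (∀ j, y j ∈ I) →
      (∃ j k, y j ≠ y k) → (⨅ j, y j) < M i y ∧ M i y < ⨆ j, y j) :
    ∀ x : Fin p → ℝ, (∀ i, x i ∈ I) →
      (∃ c : ℝ, (fun z : Fin p → ℝ => fun i => M i (fun j => z (α i j)))^[3 ^ p] x
          = fun _ => c) ∨
      ((⨅ i, x i) <
          (⨅ i, (fun z : Fin p → ℝ => fun i => M i (fun j => z (α i j)))^[3 ^ p] x i) ∧
        (⨅ i, (fun z : Fin p → ℝ => fun i => M i (fun j => z (α i j)))^[3 ^ p] x i) ≤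
          (⨆ i, (fun z : Fin p → ℝ => fun i => M i (fun j => z (α i j)))^[3 ^ p] x i) ∧
        (⨆ i, (fun z : Fin p → ℝ => fun i => M i (fun j => z (α i j)))^[3 ^ p] x i) <
          ⨆ i, x i) :=
  ergodic_incidence_graph_dichotomy_general I p d hd α hirr haper M hMI hmean hstrict
end

section
/- Let M_α : I^p → I^p be a mean-type mapping built from strict continuous means with ergodic incidence graph, and let K : I^p → I be the unique M_α-invariant mean, obtained as the common limit of iterates of M_α. Suppose F : I^p → ℝ is continuous on the diagonal Δ = {(u,…,u) : u ∈ I} and satisfies F ∘ M_α = F. Then F = φ ∘ K where φ : I → ℝ is defined by φ(u) = F(u,…,u). Conversely, every function of the form φ ∘ K with φ : I → ℝ satisfies F ∘ M_α = F. -/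
theorem invariant_functions_characterization
    (I : Set ℝ) (hI : I.OrdConnected) (p : ℕ) (hp : 0 < p)
    (M : (Fin p → ℝ) → (Fin p → ℝ))
    (hMI : ∀ x : Fin p → ℝ, (∀ i, x i ∈ I) → ∀ i, M x i ∈ I)
    (hmean : ∀ x : Fin p → ℝ, (∀ i, x i ∈ I) →
      ∀ i, (⨅ j, x j) ≤ M x i ∧ M x i ≤ ⨆ j, x j)
    (K : (Fin p → ℝ) → ℝ)
    (hKmean : ∀ x : Fin p → ℝ, (∀ i, x i ∈ I) →
      (⨅ j, x j) ≤ K x ∧ K x ≤ ⨆ j, x j)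
    (hKI : ∀ x : Fin p → ℝ, (∀ i, x i ∈ I) → K x ∈ I)
    (hKinv : ∀ x : Fin p → ℝ, (∀ i, x i ∈ I) → K (M x) = K x)
    (hconv : ∀ x : Fin p → ℝ, (∀ i, x i ∈ I) →
      Filter.Tendsto (fun n => M^[n] x) Filter.atTop (nhds (fun _ => K x)))
    (F : (Fin p → ℝ) → ℝ)
    (hF : ∀ u : ℝ, u ∈ I →
      ContinuousWithinAt F {x : Fin p → ℝ | ∀ i, x i ∈ I} (fun _ => u)) :
    ((∀ x : Fin p → ℝ, (∀ i, x i ∈ I) → F (M x) = F x) →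
      ∀ x : Fin p → ℝ, (∀ i, x i ∈ I) → F x = F (fun _ => K x)) ∧
    (∀ φ : ℝ → ℝ, ∀ x : Fin p → ℝ, (∀ i, x i ∈ I) →
      φ (K (M x)) = φ (K x)) := by
  constructor
  · intro hFM x hx
    have hiter : ∀ n, ∀ i, (M^[n] x) i ∈ I := by
      intro n
      induction n with
      | zero => simpa using hx
      | succ n ih =>
        rw [Function.iterate_succ_apply']
        exact hMI _ ih
    have hFconst : ∀ n, F (M^[n] x) = F x := by
      intro n
      induction n with
      | zero => simp
      | succ n ih =>
        rw [Function.iterate_succ_apply']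
        rw [hFM _ (hiter n), ih]
    have hin : Filter.Tendsto (fun n => M^[n] x) Filter.atTop
        (nhdsWithin (fun _ => K x) {x : Fin p → ℝ | ∀ i, x i ∈ I}) := by
      rw [tendsto_nhdsWithin_iff]
      exact ⟨hconv x hx, Filter.Eventually.of_forall fun n => hiter n⟩
    have h1 : Filter.Tendsto (fun n => F (M^[n] x)) Filter.atTop
        (nhds (F (fun _ => K x))) :=
      ((hF (K x) (hKI x hx)).tendsto).comp hin
    have h2 : Filter.Tendsto (fun n => F (M^[n] x)) Filter.atTop (nhds (F x)) := by
      simp only [hFconst]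
      exact tendsto_const_nhds
    exact tendsto_nhds_unique h2 h1
  · intro φ x hx
    rw [hKinv x hx]
end

section
/- Define M : (0,∞)⁴ → (0,∞)⁴ by M(x,y,z,t) = (2xy/(x+y), (x+y)/2, 2zt/(z+t), (z+t)/2). Then M is not weakly contractive: for every a ≠ b in (0,∞) and every n ∈ ℕ, max(M^n(a,a,b,b)) − min(M^n(a,a,b,b)) = |a − b| = max(a,a,b,b) − min(a,a,b,b). -/
noncomputable def AHmap (v : ℝ × ℝ × ℝ × ℝ) : ℝ × ℝ × ℝ × ℝ :=
  (2 * v.1 * v.2.1 / (v.1 + v.2.1),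
   (v.1 + v.2.1) / 2,
   2 * v.2.2.1 * v.2.2.2 / (v.2.2.1 + v.2.2.2),
   (v.2.2.1 + v.2.2.2) / 2)

/-- The maximum coordinate of a quadruple of reals. -/
def max4 (v : ℝ × ℝ × ℝ × ℝ) : ℝ := max (max v.1 v.2.1) (max v.2.2.1 v.2.2.2)

/-- The minimum coordinate of a quadruple of reals. -/
def min4 (v : ℝ × ℝ × ℝ × ℝ) : ℝ := min (min v.1 v.2.1) (min v.2.2.1 v.2.2.2)

lemma AHmap_fixed (a b : ℝ) (ha : 0 < a) (hb : 0 < b) :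
    AHmap (a, a, b, b) = (a, a, b, b) := by
  unfold AHmap
  have h1 : a + a ≠ 0 := by positivity
  have h2 : b + b ≠ 0 := by positivity
  simp only [Prod.mk.injEq]
  refine ⟨?_, by ring, ?_, by ring⟩ <;> field_simp <;> ring

theorem AHmap_not_weakly_contractive
    (a b : ℝ) (ha : 0 < a) (hb : 0 < b) (hab : a ≠ b) :
    ∀ n : ℕ,
      max4 (AHmap^[n] (a, a, b, b)) - min4 (AHmap^[n] (a, a, b, b)) = |a - b| ∧
      |a - b| = max4 (a, a, b, b) - min4 (a, a, b, b) := by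
  have hfix : ∀ n : ℕ, AHmap^[n] (a, a, b, b) = (a, a, b, b) :=
    fun n => Function.iterate_fixed (AHmap_fixed a b ha hb) n
  have hkey : max4 (a, a, b, b) - min4 (a, a, b, b) = |a - b| := by
    unfold max4 min4
    simp only [max_self, min_self]
    rcases le_total a b with h | h
    · rw [max_eq_right h, min_eq_left h, abs_of_nonpos (by linarith)]; ring
    · rw [max_eq_left h, min_eq_right h, abs_of_nonneg (by linarith)]
  intro n
  rw [hfix n, hkey]
  exact ⟨rfl, rfl⟩
end
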